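/- arXiv:1204.1730 — 4 statements merged into one kernel-verified Lean document; each statement's English description precedes it below -/
import Mathlib

section
/- Let λ, Γ, δ be real numbers with 0 < λ < 1, 0 < Γ < 1, 0 < δ < 1, set χ = λΓ + (1-λ)(1-δ) and ψ = λ(1-χ)/((1-λ)χ), and assume λ < χ < 1. Define π₀ = (χ-λ)/(1-δ), ε₀ = 0, ε₁ = (λ(1-Γ)/χ)·π₀, π₁ = (λ(1-δ(1-λ))/((1-λ)χ))·π₀, and for every k ≥ 2, ε_k = ψ^k·((1-λ)(1-Γ)/(1-χ)²)·π₀ and π_k = (λ/(1-λ))·ε_k. Then the series Σ_{k=0}^∞ (π_k + ε_k) converges and equals 1. -/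
/-!
For `k ≥ 2` the mass `π_k + ε_k` is geometric, `ψ ^ k * C`, and the stability condition
`λ < χ` is exactly `ψ < 1`, since `1 - ψ = (χ - λ) / ((1 - λ) χ)`. The series is therefore the
two leading terms plus a geometric tail, and the resulting rational function of `λ, Γ, δ`
collapses to `1` once `χ` is expanded.
-/

theorem hasSum_of_eq_geometric_of_two_le {r C : ℝ} (hr : |r| < 1) {f : ℕ → ℝ}
    (hf : ∀ k, 2 ≤ k → f k = r ^ k * C) :
    HasSum f (f 0 + f 1 + r ^ 2 * C / (1 - r)) := by
  have htail : HasSum (fun n ↦ f (n + 2)) (r ^ 2 * C / (1 - r)) := by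
    have hshift : (fun n ↦ f (n + 2)) = fun n ↦ r ^ 2 * C * r ^ n :=
      funext fun n ↦ by rw [hf _ (by omega)]; ring
    rw [hshift, div_eq_mul_inv]
    exact (hasSum_geometric_of_abs_lt_one hr).mul_left _
  have := (hasSum_nat_add_iff 2).1 htail
  rwa [Finset.sum_range_succ, Finset.sum_range_one, add_comm] at this

theorem stationary_distribution_sums_to_one_general
    (lam Γ δ χ ψ : ℝ)
    (hlam : 0 < lam) (hlam1 : lam < 1)
    (hδ1 : δ < 1)
    (hχ : χ = lam * Γ + (1 - lam) * (1 - δ))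
    (hψ : ψ = lam * (1 - χ) / ((1 - lam) * χ))
    (hstab : lam < χ) (hχ1 : χ < 1)
    (pi eps : ℕ → ℝ)
    (hpi0 : pi 0 = (χ - lam) / (1 - δ))
    (heps0 : eps 0 = 0)
    (heps1 : eps 1 = (lam * (1 - Γ) / χ) * pi 0)
    (hpi1 : pi 1 = (lam * (1 - δ * (1 - lam)) / ((1 - lam) * χ)) * pi 0)
    (hepsk : ∀ k : ℕ, 2 ≤ k → eps k = ψ ^ k * ((1 - lam) * (1 - Γ) / (1 - χ) ^ 2) * pi 0)
    (hpik : ∀ k : ℕ, 2 ≤ k → pi k = (lam / (1 - lam)) * eps k) :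
    HasSum (fun k : ℕ => pi k + eps k) 1 := by
  have hχ0 : 0 < χ := hlam.trans hstab
  have : 1 - lam ≠ 0 := by linarith
  have : 1 - χ ≠ 0 := by linarith
  have : 1 - δ ≠ 0 := by linarith
  have : χ ≠ 0 := hχ0.ne'
  have : χ - lam ≠ 0 := by linarith
  have h1ψ : 1 - ψ = (χ - lam) / ((1 - lam) * χ) := by
    rw [hψ]; field_simp; ring
  have hψ0 : 0 ≤ ψ :=
    hψ ▸ div_nonneg (mul_nonneg hlam.le (by linarith)) (mul_nonneg (by linarith) hχ0.le)
  have hψ1 : ψ < 1 := by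
    have : 0 < (χ - lam) / ((1 - lam) * χ) := div_pos (by linarith) (mul_pos (by linarith) hχ0)
    linarith
  set C := (lam / (1 - lam) + 1) * ((1 - lam) * (1 - Γ) / (1 - χ) ^ 2) * pi 0
  have htail : ∀ k, 2 ≤ k → pi k + eps k = ψ ^ k * C := fun k hk ↦ by
    rw [hpik k hk, hepsk k hk]; ring
  convert hasSum_of_eq_geometric_of_two_le (abs_lt.2 ⟨by linarith, hψ1⟩) htail using 1
  simp only [C]
  rw [heps0, hpi1, heps1, div_eq_mul_inv _ (1 - ψ), h1ψ, hψ, hpi0]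
  field_simp
  rw [hχ]; ring

/-- The stationary probabilities of the feedback-scheme Markov chain
sum to one. -/
theorem stationary_distribution_sums_to_one
    (lam Γ δ χ ψ : ℝ)
    (hlam : 0 < lam) (hlam1 : lam < 1)
    (hΓ : 0 < Γ) (hΓ1 : Γ < 1)
    (hδ : 0 < δ) (hδ1 : δ < 1)
    (hχ : χ = lam * Γ + (1 - lam) * (1 - δ))
    (hψ : ψ = lam * (1 - χ) / ((1 - lam) * χ))
    (hstab : lam < χ) (hχ1 : χ < 1)
    (pi eps : ℕ → ℝ)
    (hpi0 : pi 0 = (χ - lam) / (1 - δ))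
    (heps0 : eps 0 = 0)
    (heps1 : eps 1 = (lam * (1 - Γ) / χ) * pi 0)
    (hpi1 : pi 1 = (lam * (1 - δ * (1 - lam)) / ((1 - lam) * χ)) * pi 0)
    (hepsk : ∀ k : ℕ, 2 ≤ k → eps k = ψ ^ k * ((1 - lam) * (1 - Γ) / (1 - χ) ^ 2) * pi 0)
    (hpik : ∀ k : ℕ, 2 ≤ k → pi k = (lam / (1 - lam)) * eps k) :
    HasSum (fun k : ℕ => pi k + eps k) 1 :=
  stationary_distribution_sums_to_one_general lam Γ δ χ ψ hlam hlam1 hδ1 hχ hψ hstab hχ1 pi eps hpi0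
    heps0 heps1 hpi1 hepsk hpik
end

section
/- Let λ, Γ, δ ∈ (0,1), χ = λΓ + (1-λ)(1-δ), ψ = λ(1-χ)/((1-λ)χ), with χ < 1. Suppose π₀ > 0 and nonnegative numbers π₂, ε₂ satisfy the two equations π₂·(1-λ)·Γ + ε₂·(1-λ)·(1-δ) = (λ²(1-Γ)/((1-λ)χ))·π₀ and ε₂·(1 - δ(1-λ)) − π₂·(1-λ)·(1-Γ) = (λ²(1-Γ)/((1-λ)χ))·π₀. Then ε₂ = ((1-λ)/λ)·π₂, and moreover ε₂ = ψ²·((1-λ)(1-Γ)/(1-χ)²)·π₀ and π₂ = ψ²·(λ(1-Γ)/(1-χ)²)·π₀. -/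
/-! Subtracting the first balance equation from the second leaves `ε₂ λ = π₂ (1 - λ)`. Feeding
this back into the first equation collapses its left side to `π₂ (1 - λ) χ / λ`, which gives `π₂`;
the closed forms follow because `ψ / (1 - χ) = λ / ((1 - λ) χ)`. -/

theorem eps_mul_lam_eq_of_balance {R : Type*} [CommRing R] {lam Γ δ pi2 eps2 c : R}
    (heq1 : pi2 * (1 - lam) * Γ + eps2 * (1 - lam) * (1 - δ) = c)
    (heq2 : eps2 * (1 - δ * (1 - lam)) - pi2 * (1 - lam) * (1 - Γ) = c) :
    eps2 * lam = pi2 * (1 - lam) := by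
  linear_combination heq2 - heq1

theorem balance_lhs_mul_lam {R : Type*} [CommRing R] {lam Γ δ pi2 eps2 : R}
    (hrel : eps2 * lam = pi2 * (1 - lam)) :
    (pi2 * (1 - lam) * Γ + eps2 * (1 - lam) * (1 - δ)) * lam
      = pi2 * (1 - lam) * (lam * Γ + (1 - lam) * (1 - δ)) := by
  linear_combination (1 - lam) * (1 - δ) * hrel

theorem sq_psi_mul_div_sq_one_sub {K : Type*} [Field K] {lam χ ψ : K} (x : K)
    (hψ : ψ = lam * (1 - χ) / ((1 - lam) * χ)) (hχ1 : χ ≠ 1) :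
    ψ ^ 2 * (x / (1 - χ) ^ 2) = (lam / ((1 - lam) * χ)) ^ 2 * x := by
  have h1χ : 1 - χ ≠ 0 := sub_ne_zero.2 hχ1.symm
  rw [hψ, div_pow, mul_pow, div_pow]
  field_simp

theorem balance_equations_give_eps2_pi2_general
    (lam Γ δ χ ψ : ℝ)
    (hlam : 0 < lam) (hlam1 : lam < 1)
    (hΓ : 0 < Γ)
    (hδ1 : δ < 1)
    (hχ : χ = lam * Γ + (1 - lam) * (1 - δ))
    (hψ : ψ = lam * (1 - χ) / ((1 - lam) * χ))
    (hχ1 : χ < 1)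
    (pi0 pi2 eps2 : ℝ)
    (heq1 : pi2 * (1 - lam) * Γ + eps2 * (1 - lam) * (1 - δ)
      = (lam ^ 2 * (1 - Γ) / ((1 - lam) * χ)) * pi0)
    (heq2 : eps2 * (1 - δ * (1 - lam)) - pi2 * (1 - lam) * (1 - Γ)
      = (lam ^ 2 * (1 - Γ) / ((1 - lam) * χ)) * pi0) :
    eps2 = ((1 - lam) / lam) * pi2 ∧
      eps2 = ψ ^ 2 * ((1 - lam) * (1 - Γ) / (1 - χ) ^ 2) * pi0 ∧
      pi2 = ψ ^ 2 * (lam * (1 - Γ) / (1 - χ) ^ 2) * pi0 := by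
  have h1lam : 1 - lam ≠ 0 := (sub_pos.2 hlam1).ne'
  have hχ0 : χ ≠ 0 := by
    rw [hχ]
    exact (add_pos (mul_pos hlam hΓ) (mul_pos (sub_pos.2 hlam1) (sub_pos.2 hδ1))).ne'
  have hrel := eps_mul_lam_eq_of_balance heq1 heq2
  have hratio : eps2 = ((1 - lam) / lam) * pi2 := by
    rw [div_mul_eq_mul_div, eq_div_iff hlam.ne', hrel, mul_comm]
  have hpi2 : pi2 = ψ ^ 2 * (lam * (1 - Γ) / (1 - χ) ^ 2) * pi0 := by
    have hχpi2 := balance_lhs_mul_lam (δ := δ) (Γ := Γ) hrel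
    rw [heq1, ← hχ] at hχpi2
    rw [sq_psi_mul_div_sq_one_sub _ hψ hχ1.ne]
    field_simp at hχpi2 ⊢
    linear_combination -hχpi2
  refine ⟨hratio, ?_, hpi2⟩
  rw [hratio, hpi2]
  field_simp

/-- Solving the two equations for the states with two packets yields
`ε₂ = ((1-λ)/λ)·π₂` and the closed forms for `ε₂` and `π₂`. -/
theorem balance_equations_give_eps2_pi2
    (lam Γ δ χ ψ : ℝ)
    (hlam : 0 < lam) (hlam1 : lam < 1)
    (hΓ : 0 < Γ) (hΓ1 : Γ < 1)
    (hδ : 0 < δ) (hδ1 : δ < 1)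
    (hχ : χ = lam * Γ + (1 - lam) * (1 - δ))
    (hψ : ψ = lam * (1 - χ) / ((1 - lam) * χ))
    (hχ1 : χ < 1)
    (pi0 pi2 eps2 : ℝ)
    (hpi0 : 0 < pi0) (hpi2 : 0 ≤ pi2) (heps2 : 0 ≤ eps2)
    (heq1 : pi2 * (1 - lam) * Γ + eps2 * (1 - lam) * (1 - δ)
      = (lam ^ 2 * (1 - Γ) / ((1 - lam) * χ)) * pi0)
    (heq2 : eps2 * (1 - δ * (1 - lam)) - pi2 * (1 - lam) * (1 - Γ)
      = (lam ^ 2 * (1 - Γ) / ((1 - lam) * χ)) * pi0) :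
    eps2 = ((1 - lam) / lam) * pi2 ∧
      eps2 = ψ ^ 2 * ((1 - lam) * (1 - Γ) / (1 - χ) ^ 2) * pi0 ∧
      pi2 = ψ ^ 2 * (lam * (1 - Γ) / (1 - χ) ^ 2) * pi0 :=
  balance_equations_give_eps2_pi2_general lam Γ δ χ ψ hlam hlam1 hΓ hδ1 hχ hψ hχ1 pi0 pi2 eps2 heq1
    heq2
end

section
/- Let M_p be a positive integer, λ ∈ (0,1), P ∈ [0,1), s ∈ [0,1), and M_s a positive integer. Define Γ = (1/M_p)·(1-P)·(1-s)^{M_s}, δ = 1 − (1-P)/M_p, and χ = λΓ + (1-λ)(1-δ). Then the difference Δπ₀ between the feedback-scheme empty-queue probability (χ-λ)/(1-δ) and the no-feedback empty-queue probability 1 − λ/Γ satisfies Δπ₀ = (λ(1-Γ)/Γ)·[1 − (1-s)^{M_s}], and this quantity is nonnegative. Consequently (χ-λ)/(1-δ) ≥ 1 − λ/Γ. -/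
/-- The gain `Δπ₀` of the feedback scheme over the no-feedback scheme
equals `(λ(1-Γ)/Γ)(1-(1-s)^{M_s})` and is nonnegative. -/
theorem delta_pi0_nonneg
    (Mp Ms : ℕ) (hMp : 0 < Mp) (hMs : 0 < Ms)
    (lam P s : ℝ)
    (hlam : 0 < lam) (hlam1 : lam < 1)
    (hP : 0 ≤ P) (hP1 : P < 1)
    (hs : 0 ≤ s) (hs1 : s < 1)
    (Γ δ χ : ℝ)
    (hΓ : Γ = (1 / (Mp : ℝ)) * (1 - P) * (1 - s) ^ Ms)
    (hδ : δ = 1 - (1 - P) / (Mp : ℝ))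
    (hχ : χ = lam * Γ + (1 - lam) * (1 - δ)) :
    (χ - lam) / (1 - δ) - (1 - lam / Γ)
        = (lam * (1 - Γ) / Γ) * (1 - (1 - s) ^ Ms) ∧
      0 ≤ (lam * (1 - Γ) / Γ) * (1 - (1 - s) ^ Ms) ∧
      1 - lam / Γ ≤ (χ - lam) / (1 - δ) := by
  have hMp' : (0:ℝ) < (Mp : ℝ) := by exact_mod_cast hMp
  have hMp1 : (1:ℝ) ≤ (Mp : ℝ) := by exact_mod_cast hMp
  have ht0 : (0:ℝ) < (1 - s) ^ Ms := pow_pos (by linarith) Ms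
  have ht1 : (1 - s) ^ Ms ≤ 1 := pow_le_one₀ (by linarith) (by linarith)
  have hδ0 : (0:ℝ) < 1 - δ := by
    rw [hδ]; have : 0 < (1 - P) / (Mp : ℝ) := div_pos (by linarith) hMp'
    linarith
  have hΓ0 : (0:ℝ) < Γ := by
    rw [hΓ]
    exact mul_pos (mul_pos (by positivity) (by linarith)) ht0
  have hΓ1 : Γ ≤ 1 := by
    rw [hΓ]
    have h1 : (1 / (Mp : ℝ)) * (1 - P) ≤ 1 := by
      rw [div_mul_eq_mul_div, one_mul, div_le_one hMp']; linarith
    calc (1 / (Mp : ℝ)) * (1 - P) * (1 - s) ^ Ms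
        ≤ 1 * 1 := mul_le_mul h1 ht1 (le_of_lt ht0) (by linarith)
      _ = 1 := by ring
  have key : (χ - lam) / (1 - δ) - (1 - lam / Γ)
      = (lam * (1 - Γ) / Γ) * (1 - (1 - s) ^ Ms) := by
    have hΓeq : Γ = (1 - δ) * (1 - s) ^ Ms := by rw [hΓ, hδ]; ring
    rw [hχ, hΓeq]
    field_simp
    ring
  refine ⟨key, ?_, ?_⟩
  · apply mul_nonneg
    · apply div_nonneg _ hΓ0.le
      exact mul_nonneg hlam.le (by linarith)
    · linarith
  · have h := key
    nlinarith [mul_nonneg (div_nonneg (mul_nonneg hlam.le (by linarith : (0:ℝ) ≤ 1 - Γ)) hΓ0.le) (by linarith : (0:ℝ) ≤ 1 - (1 - s) ^ Ms)]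
end

section
/- Let λ, Γ, δ ∈ (0,1), χ = λΓ + (1-λ)(1-δ), ψ = λ(1-χ)/((1-λ)χ), with 0 < χ < 1 and λ < χ. Set π₀ = (χ-λ)/(1-δ), ε₁ = (λ(1-Γ)/χ)·π₀, π₁ = (λ(1-δ(1-λ))/((1-λ)χ))·π₀, and for k ≥ 2, ε_k = ψ^k·((1-λ)(1-Γ)/(1-χ)²)·π₀ and π_k = (λ/(1-λ))·ε_k. Then the mean queue length N = Σ_{k=1}^∞ k·(π_k + ε_k) converges and satisfies N = λ · [(Γ−χ)(χ−λ)² + (1−λ)²(1−Γ)χ] / [(1−λ)(1−χ)(1−δ)(χ−λ)]. -/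
/-!
For `k ≥ 2` the state probabilities satisfy `π_k + ε_k = ε_k / (1 - λ)`, a constant multiple of
`ψ ^ k`, so apart from its `k = 1` term the series is `c · ∑ k ψ ^ k = c ψ / (1 - ψ) ^ 2`. The
stability condition `λ < χ` is exactly `ψ < 1`, and the closed form is then a rational identity
in `λ, Γ, δ` once `χ` is expanded.
-/

theorem hasSum_of_eq_mul_coe_mul_geometric_of_two_le {𝕜 : Type*} [NormedDivisionRing 𝕜]
    [HasSummableGeomSeries 𝕜] {f : ℕ → 𝕜} {c r : 𝕜} (hr : ‖r‖ < 1) (h0 : f 0 = 0)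
    (hf : ∀ k, 2 ≤ k → f k = c * (k * r ^ k)) :
    HasSum f (f 1 + c * (r / (1 - r) ^ 2 - r)) := by
  have hgeo := ((hasSum_coe_mul_geometric_of_norm_lt_one hr).mul_left c).update 1 (f 1)
  have hupdate : Function.update (fun k : ℕ ↦ c * (k * r ^ k)) 1 (f 1) = f := by
    funext k
    rcases k with _ | _ | k
    · simp [h0]
    · simp
    · rw [Function.update_of_ne (by omega), hf _ (by omega)]
  rw [hupdate, Nat.cast_one, one_mul, pow_one, sub_add_eq_add_sub] at hgeo
  rwa [mul_sub, add_sub]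

theorem abs_mul_one_sub_div_mul_lt_one {a b : ℝ} (ha : 0 ≤ a) (ha1 : a < 1) (hb1 : b ≤ 1)
    (hab : a < b) : |a * (1 - b) / ((1 - a) * b)| < 1 := by
  have hden : 0 < (1 - a) * b := mul_pos (by linarith) (by linarith)
  rw [abs_of_nonneg (div_nonneg (mul_nonneg ha (by linarith)) hden.le), div_lt_one hden]
  nlinarith

theorem feedback_mean_queue_length_eq {lam Γ δ χ ψ p₀ : ℝ}
    (hχ : χ = lam * Γ + (1 - lam) * (1 - δ)) (hψ : ψ = lam * (1 - χ) / ((1 - lam) * χ))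
    (hp₀ : p₀ = (χ - lam) / (1 - δ))
    (hlam1 : lam ≠ 1) (hδ1 : δ ≠ 1) (hχ0 : χ ≠ 0) (hχ1 : χ ≠ 1) (hstab : lam ≠ χ) :
    lam * (1 - δ * (1 - lam)) / ((1 - lam) * χ) * p₀ + lam * (1 - Γ) / χ * p₀
        + (1 - Γ) / (1 - χ) ^ 2 * p₀ * (ψ / (1 - ψ) ^ 2 - ψ)
      = lam * ((Γ - χ) * (χ - lam) ^ 2 + (1 - lam) ^ 2 * (1 - Γ) * χ)
        / ((1 - lam) * (1 - χ) * (1 - δ) * (χ - lam)) := by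
  have h1ψ : 1 - ψ = (χ - lam) / ((1 - lam) * χ) := by
    rw [hψ]; field_simp; ring
  have : 1 - lam ≠ 0 := sub_ne_zero.mpr hlam1.symm
  have : 1 - δ ≠ 0 := sub_ne_zero.mpr hδ1.symm
  have : 1 - χ ≠ 0 := sub_ne_zero.mpr hχ1.symm
  have : χ - lam ≠ 0 := sub_ne_zero.mpr hstab.symm
  rw [h1ψ, hψ, hp₀]
  field_simp
  subst hχ
  ring

theorem mean_queue_length_feedback_general
    (lam Γ δ χ ψ : ℝ)
    (hlam : 0 < lam) (hlam1 : lam < 1)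
    (hδ1 : δ < 1)
    (hχ : χ = lam * Γ + (1 - lam) * (1 - δ))
    (hψ : ψ = lam * (1 - χ) / ((1 - lam) * χ))
    (hχ1 : χ < 1) (hstab : lam < χ)
    (pi eps : ℕ → ℝ)
    (hpi0 : pi 0 = (χ - lam) / (1 - δ))
    (heps1 : eps 1 = (lam * (1 - Γ) / χ) * pi 0)
    (hpi1 : pi 1 = (lam * (1 - δ * (1 - lam)) / ((1 - lam) * χ)) * pi 0)
    (hepsk : ∀ k : ℕ, 2 ≤ k → eps k = ψ ^ k * ((1 - lam) * (1 - Γ) / (1 - χ) ^ 2) * pi 0)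
    (hpik : ∀ k : ℕ, 2 ≤ k → pi k = (lam / (1 - lam)) * eps k) :
    HasSum (fun k : ℕ => (k : ℝ) * (pi k + eps k))
      (lam * ((Γ - χ) * (χ - lam) ^ 2 + (1 - lam) ^ 2 * (1 - Γ) * χ)
        / ((1 - lam) * (1 - χ) * (1 - δ) * (χ - lam))) := by
  have hχ0 : χ ≠ 0 := by linarith
  have hψ1 : ‖ψ‖ < 1 := by
    rw [hψ, Real.norm_eq_abs]
    exact abs_mul_one_sub_div_mul_lt_one hlam.le hlam1 hχ1.le hstab
  have htail : ∀ k : ℕ, 2 ≤ k →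
      (k : ℝ) * (pi k + eps k) = (1 - Γ) / (1 - χ) ^ 2 * pi 0 * (k * ψ ^ k) := by
    intro k hk
    have : 1 - lam ≠ 0 := by linarith
    rw [hpik k hk, hepsk k hk]
    field_simp
    ring
  have hsum := hasSum_of_eq_mul_coe_mul_geometric_of_two_le hψ1 (by simp) htail
  rwa [Nat.cast_one, one_mul, hpi1, heps1, feedback_mean_queue_length_eq hχ hψ hpi0 hlam1.ne
    hδ1.ne hχ0 hχ1.ne hstab.ne] at hsum

/-- The mean primary queue length under the feedback scheme converges
and equals `λ[(Γ-χ)(χ-λ)² + (1-λ)²(1-Γ)χ] / [(1-λ)(1-χ)(1-δ)(χ-λ)]`. -/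
theorem mean_queue_length_feedback
    (lam Γ δ χ ψ : ℝ)
    (hlam : 0 < lam) (hlam1 : lam < 1)
    (hΓ : 0 < Γ) (hΓ1 : Γ < 1)
    (hδ : 0 < δ) (hδ1 : δ < 1)
    (hχ : χ = lam * Γ + (1 - lam) * (1 - δ))
    (hψ : ψ = lam * (1 - χ) / ((1 - lam) * χ))
    (hχpos : 0 < χ) (hχ1 : χ < 1) (hstab : lam < χ)
    (pi eps : ℕ → ℝ)
    (hpi0 : pi 0 = (χ - lam) / (1 - δ))
    (heps0 : eps 0 = 0)
    (heps1 : eps 1 = (lam * (1 - Γ) / χ) * pi 0)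
    (hpi1 : pi 1 = (lam * (1 - δ * (1 - lam)) / ((1 - lam) * χ)) * pi 0)
    (hepsk : ∀ k : ℕ, 2 ≤ k → eps k = ψ ^ k * ((1 - lam) * (1 - Γ) / (1 - χ) ^ 2) * pi 0)
    (hpik : ∀ k : ℕ, 2 ≤ k → pi k = (lam / (1 - lam)) * eps k) :
    HasSum (fun k : ℕ => (k : ℝ) * (pi k + eps k))
      (lam * ((Γ - χ) * (χ - lam) ^ 2 + (1 - lam) ^ 2 * (1 - Γ) * χ)
        / ((1 - lam) * (1 - χ) * (1 - δ) * (χ - lam))) :=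
  mean_queue_length_feedback_general lam Γ δ χ ψ hlam hlam1 hδ1 hχ hψ hχ1 hstab pi eps hpi0 heps1
    hpi1 hepsk hpik
end
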